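/- arXiv:math/0410033 — 3 statements merged into one kernel-verified Lean document; each statement's English description precedes it below -/
import Mathlib

section
/- Let h(t) = Σ_λ a_λ e^{λt} where λ ranges over a finite symmetric set of reals, a_λ = a_{-λ} > 0, a₀ ≥ 1, Σ a_λ = 2, and at least one pair ±λ ≠ 0 occurs. Then for all t ∈ ℝ: h'(t)² + 2h''(t) + 2h''(0) ≥ h''(0)·h(t)². -/
/-!
By the symmetry `a λ = a (-λ)`, `h t = ∑ a λ cosh (λ t)`; put `M = h''(0) = ∑ a λ λ²`.
Chebyshev's sum inequality for the weights `a λ`, `λ ≠ 0`, whose total mass `2 - a 0` is at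
most `1`, applied to the similarly ordered `λ²` and `cosh (λ t)`, gives `h'' - M h + M ≥ 0`.
The function `F = h'² - M (h - 2) h` has derivative `2 h' (h'' - M h + M)` and `h'` has the sign
of `t`, so `F` is smallest at `t = 0`, where it vanishes: `h'² ≥ M h² - 2 M h`. Adding
`2 (h'' - M h + M) ≥ 0` gives the claim.
-/

open Real Finset

theorem MonovaryOn.sum_mul_sum_le_sum_mul_sum_of_nonneg {ι α : Type*}
    [CommRing α] [LinearOrder α] [IsStrictOrderedRing α] {s : Finset ι} {w f g : ι → α}
    (hfg : MonovaryOn f g s) (hw : ∀ i ∈ s, 0 ≤ w i) :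
    (∑ i ∈ s, w i * f i) * (∑ i ∈ s, w i * g i) ≤
      (∑ i ∈ s, w i) * ∑ i ∈ s, w i * (f i * g i) := by
  have hpairs : 0 ≤ ∑ i ∈ s, ∑ j ∈ s, w i * w j * ((f j - f i) * (g j - g i)) :=
    sum_nonneg fun i hi => sum_nonneg fun j hj =>
      mul_nonneg (mul_nonneg (hw i hi) (hw j hj)) (hfg.sub_mul_sub_nonneg hi hj)
  have hexpand : ∑ i ∈ s, ∑ j ∈ s, w i * w j * ((f j - f i) * (g j - g i)) =
      2 * ((∑ i ∈ s, w i) * ∑ i ∈ s, w i * (f i * g i)) -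
        2 * ((∑ i ∈ s, w i * f i) * ∑ i ∈ s, w i * g i) := by
    calc _ = ∑ i ∈ s, ∑ j ∈ s, (w i * (w j * (f j * g j)) + w j * (w i * (f i * g i))
          - w i * f i * (w j * g j) - w j * f j * (w i * g i)) :=
          sum_congr rfl fun _ _ => sum_congr rfl fun _ _ => by ring
      _ = _ := by simp only [sum_add_distrib, sum_sub_distrib, ← mul_sum, ← sum_mul]; ring
  linarith

theorem Real.mul_sinh_nonneg (x : ℝ) : 0 ≤ x * sinh x := by
  rcases le_total 0 x with hx | hx
  · exact mul_nonneg hx (sinh_nonneg_iff.2 hx)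
  · exact mul_nonneg_of_nonpos_of_nonpos hx (sinh_nonpos_iff.2 hx)

theorem monovary_mul_self_cosh_mul (t : ℝ) :
    Monovary (fun l : ℝ => l * l) fun l => cosh (l * t) := by
  intro i j hij
  dsimp only at hij ⊢
  rw [cosh_lt_cosh, abs_mul, abs_mul] at hij
  rw [← abs_mul_abs_self i, ← abs_mul_abs_self j]
  exact mul_self_le_mul_self (abs_nonneg i) (lt_of_mul_lt_mul_right hij (abs_nonneg t)).le

theorem le_of_hasDerivAt_of_sub_mul_nonneg {F F' : ℝ → ℝ} {x₀ : ℝ}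
    (hF : ∀ x, HasDerivAt F (F' x) x) (hF' : ∀ x, 0 ≤ (x - x₀) * F' x) (x : ℝ) :
    F x₀ ≤ F x := by
  have hcont : Continuous F := continuous_iff_continuousAt.2 fun x => (hF x).continuousAt
  rcases le_total x₀ x with hx | hx
  · refine monotoneOn_of_hasDerivWithinAt_nonneg (convex_Ici x₀) hcont.continuousOn
      (fun y _ => (hF y).hasDerivWithinAt) (fun y hy => ?_) (Set.mem_Ici.2 le_rfl) hx hx
    rw [interior_Ici, Set.mem_Ioi] at hy
    exact nonneg_of_mul_nonneg_right (hF' y) (sub_pos.2 hy)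
  · refine antitoneOn_of_hasDerivWithinAt_nonpos (convex_Iic x₀) hcont.continuousOn
      (fun y _ => (hF y).hasDerivWithinAt) (fun y hy => ?_) hx (Set.mem_Iic.2 le_rfl) hx
    rw [interior_Iic, Set.mem_Iio] at hy
    exact nonpos_of_mul_nonneg_right (hF' y) (sub_neg.2 hy)

section HyperbolicSums

variable (Λ : Finset ℝ) (c : ℝ → ℝ)

noncomputable def coshSum (t : ℝ) : ℝ := ∑ l ∈ Λ, c l * cosh (l * t)

noncomputable def sinhSum (t : ℝ) : ℝ := ∑ l ∈ Λ, c l * sinh (l * t)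

theorem hasDerivAt_coshSum (t : ℝ) :
    HasDerivAt (coshSum Λ c) (sinhSum Λ (fun l => c l * l) t) t := by
  unfold coshSum sinhSum
  refine HasDerivAt.fun_sum fun l _ => ?_
  exact ((((hasDerivAt_id' t).const_mul l).cosh).const_mul (c l)).congr_deriv (by ring)

theorem hasDerivAt_sinhSum (t : ℝ) :
    HasDerivAt (sinhSum Λ c) (coshSum Λ (fun l => c l * l) t) t := by
  unfold coshSum sinhSum
  refine HasDerivAt.fun_sum fun l _ => ?_
  exact ((((hasDerivAt_id' t).const_mul l).sinh).const_mul (c l)).congr_deriv (by ring)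

@[simp]
theorem coshSum_zero : coshSum Λ c 0 = ∑ l ∈ Λ, c l := by
  simp [coshSum]

@[simp]
theorem sinhSum_zero : sinhSum Λ c 0 = 0 := by
  simp [sinhSum]

variable {Λ c}

theorem sum_mul_exp_eq_coshSum (hΛ : ∀ l ∈ Λ, -l ∈ Λ) (hc : ∀ l ∈ Λ, c (-l) = c l) (t : ℝ) :
    ∑ l ∈ Λ, c l * exp (l * t) = coshSum Λ c t := by
  have hneg : ∑ l ∈ Λ, c l * exp (-(l * t)) = ∑ l ∈ Λ, c l * exp (l * t) :=
    sum_nbij' Neg.neg Neg.neg hΛ hΛ (fun _ _ => neg_neg _) (fun _ _ => neg_neg _)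
      fun l hl => by rw [hc l hl, neg_mul]
  simp only [coshSum, cosh_eq, mul_div, mul_add, ← sum_div, sum_add_distrib, hneg]
  ring

theorem mul_sinhSum_nonneg (hc : ∀ l ∈ Λ, 0 ≤ c l) (t : ℝ) :
    0 ≤ t * sinhSum Λ (fun l => c l * l) t := by
  rw [sinhSum, mul_sum]
  refine sum_nonneg fun l hl => ?_
  calc 0 ≤ c l * (l * t * sinh (l * t)) := mul_nonneg (hc l hl) (mul_sinh_nonneg _)
    _ = t * (c l * l * sinh (l * t)) := by ring

end HyperbolicSums

section MomentInequality

variable {Λ : Finset ℝ} {a : ℝ → ℝ}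

theorem mul_coshSum_le_coshSum_add (h0 : 0 ∈ Λ) (ha : ∀ l ∈ Λ, 0 ≤ a l) (ha0 : 1 ≤ a 0)
    (hsum : ∑ l ∈ Λ, a l = 2) (t : ℝ) :
    (∑ l ∈ Λ, a l * l * l) * coshSum Λ a t ≤
      coshSum Λ (fun l => a l * l * l) t + ∑ l ∈ Λ, a l * l * l := by
  set s := Λ.erase 0
  have hs : ∀ l ∈ s, 0 ≤ a l := fun l hl => ha l (mem_of_mem_erase hl)
  have hq : ∑ l ∈ s, a l = 2 - a 0 := by linarith [add_sum_erase Λ a h0]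
  have hM : ∑ l ∈ Λ, a l * l * l = ∑ l ∈ s, a l * l * l := (sum_erase Λ (by simp)).symm
  have hD : coshSum Λ (fun l => a l * l * l) t = ∑ l ∈ s, a l * l * l * cosh (l * t) :=
    (sum_erase Λ (by simp)).symm
  have hC : coshSum Λ a t = a 0 + ∑ l ∈ s, a l * cosh (l * t) := by
    rw [coshSum, ← add_sum_erase Λ _ h0, zero_mul, cosh_zero, mul_one]
  have hcheb :=
    ((monovary_mul_self_cosh_mul t).monovaryOn _).sum_mul_sum_le_sum_mul_sum_of_nonneg hs
  simp only [← mul_assoc, hq] at hcheb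
  have hMD : ∑ l ∈ s, a l * l * l ≤ ∑ l ∈ s, a l * l * l * cosh (l * t) :=
    sum_le_sum fun l hl => le_mul_of_one_le_right
      (by simpa [mul_assoc] using mul_nonneg (hs l hl) (mul_self_nonneg l)) (one_le_cosh _)
  rw [hM, hD, hC]
  linarith [mul_nonneg (sub_nonneg.2 ha0) (sub_nonneg.2 hMD)]

theorem mul_coshSum_sub_two_le_sq_sinhSum (h0 : 0 ∈ Λ) (ha : ∀ l ∈ Λ, 0 ≤ a l)
    (ha0 : 1 ≤ a 0) (hsum : ∑ l ∈ Λ, a l = 2) (t : ℝ) :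
    (∑ l ∈ Λ, a l * l * l) * ((coshSum Λ a t - 2) * coshSum Λ a t) ≤
      sinhSum Λ (fun l => a l * l) t ^ 2 := by
  set M := ∑ l ∈ Λ, a l * l * l
  have hF (u : ℝ) : HasDerivAt
      (fun u => sinhSum Λ (fun l => a l * l) u ^ 2 - M * ((coshSum Λ a u - 2) * coshSum Λ a u))
      (2 * sinhSum Λ (fun l => a l * l) u *
        (coshSum Λ (fun l => a l * l * l) u + M - M * coshSum Λ a u)) u := by
    have hC := hasDerivAt_coshSum Λ a u
    exact (((hasDerivAt_sinhSum Λ (fun l => a l * l) u).pow 2).sub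
      (((hC.sub_const 2).mul hC).const_mul M)).congr_deriv (by push_cast; ring)
  have hsign (u : ℝ) : 0 ≤ (u - 0) * (2 * sinhSum Λ (fun l => a l * l) u *
      (coshSum Λ (fun l => a l * l * l) u + M - M * coshSum Λ a u)) := by
    have hG := mul_coshSum_le_coshSum_add h0 ha ha0 hsum u
    have hS := mul_sinhSum_nonneg ha u
    rw [sub_zero, ← mul_assoc, mul_left_comm]
    exact mul_nonneg (mul_nonneg zero_le_two hS) (by linarith)
  simpa [hsum] using le_of_hasDerivAt_of_sub_mul_nonneg hF hsign t

end MomentInequality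

theorem exponential_sum_moment_inequality_general
    (Λ : Finset ℝ) (hΛsymm : ∀ l ∈ Λ, -l ∈ Λ) (h0 : (0 : ℝ) ∈ Λ)
    (a : ℝ → ℝ) (hapos : ∀ l ∈ Λ, 0 < a l)
    (hasymm : ∀ l ∈ Λ, a (-l) = a l)
    (ha0 : 1 ≤ a 0) (hsum : ∑ l ∈ Λ, a l = 2)
    (h : ℝ → ℝ) (hdef : ∀ t, h t = ∑ l ∈ Λ, a l * Real.exp (l * t)) :
    ∀ t : ℝ,
      (deriv h t) ^ 2 + 2 * deriv (deriv h) t +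
          2 * deriv (deriv h) 0 ≥ deriv (deriv h) 0 * (h t) ^ 2 := by
  intro t
  obtain rfl : h = coshSum Λ a :=
    funext fun t => (hdef t).trans (sum_mul_exp_eq_coshSum hΛsymm hasymm t)
  have ha : ∀ l ∈ Λ, 0 ≤ a l := fun l hl => (hapos l hl).le
  have h' : deriv (coshSum Λ a) = sinhSum Λ fun l => a l * l :=
    funext fun t => (hasDerivAt_coshSum Λ a t).deriv
  have h'' : deriv (sinhSum Λ fun l => a l * l) = coshSum Λ fun l => a l * l * l :=
    funext fun t => (hasDerivAt_sinhSum Λ _ t).deriv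
  rw [h', h'', coshSum_zero]
  have hF := mul_coshSum_sub_two_le_sq_sinhSum h0 ha ha0 hsum t
  have hG := mul_coshSum_le_coshSum_add h0 ha ha0 hsum t
  linarith

/-- Let `h(t) = Σ_λ a_λ e^{λt}` where λ ranges over a finite
symmetric set of reals containing 0, `a λ = a (-λ) > 0`, `a 0 ≥ 1`,
`Σ a λ = 2`, and at least one pair `±λ ≠ 0` occurs.  Then for all `t ∈ ℝ`:
`h'(t)² + 2h''(t) + 2h''(0) ≥ h''(0)·h(t)²`. -/
theorem exponential_sum_moment_inequality
    (Λ : Finset ℝ) (hΛsymm : ∀ l ∈ Λ, -l ∈ Λ) (h0 : (0 : ℝ) ∈ Λ)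
    (a : ℝ → ℝ) (hapos : ∀ l ∈ Λ, 0 < a l)
    (hasymm : ∀ l ∈ Λ, a (-l) = a l)
    (ha0 : 1 ≤ a 0) (hsum : ∑ l ∈ Λ, a l = 2)
    (hne : ∃ l ∈ Λ, l ≠ 0)
    (h : ℝ → ℝ) (hdef : ∀ t, h t = ∑ l ∈ Λ, a l * Real.exp (l * t)) :
    ∀ t : ℝ,
      (deriv h t) ^ 2 + 2 * deriv (deriv h) t +
          2 * deriv (deriv h) 0 ≥ deriv (deriv h) 0 * (h t) ^ 2 :=
  exponential_sum_moment_inequality_general Λ hΛsymm h0 a hapos hasymm ha0 hsum h hdef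
end

section
/- With notation as in the instanton-flow computation: let ζ = ξ + iΣ_λ η_λ ∈ ℂ⊗g_R be nilpotent with ξ,η ∈ p_R, η_λ the ad ξ-eigencomponents, and set ζ_λ = iη_λ for λ ≠ 0, ζ₀ = ξ + iη₀. Then the squared norm of the ik_R-component m₃(t) of the moment map along the flow f_t(ζ) = Ad(exp(tξ))(ζ) is ‖m₃(t)‖² = (Σ_λ λ²(e^{λt} + e^{-λt})² ‖ζ_λ‖²) / (Σ_λ e^{2λt} ‖ζ_λ‖²)². -/
/-!
Write `σ` for the conjugation of `g` with respect to `g_R` and `H x y = -B(x, θ (σ y))`.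
Both `f` and `s ↦ Σ_λ e^{λs} ζ_λ` solve `f' = [ξ, f]` with initial value `ζ`, so they agree by
uniqueness for linear ODEs. Uniqueness of the `ad ξ`-eigendecomposition turns `σ η = η` and
`θ η = -η` into `σ η_λ = η_λ` and `θ η_λ = -η_{-λ}`. Since `θ ∘ σ` maps the `λ`-eigenspace of
`ad ξ` to the `(-λ)`-eigenspace, ad-invariance of the Killing form makes the `ζ_λ` pairwise
`H`-orthogonal, whence `‖f_t‖² = Σ e^{2λt} ‖ζ_λ‖²`. Writing `f_t = ξ + i u` with `σ u = u`, one
finds `m₃(t) = -‖f_t‖⁻² • i [ξ, u - θ u] = -‖f_t‖⁻² • Σ λ (e^{λt} + e^{-λt}) ζ_λ`, and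
orthogonality once more gives its norm.
-/

open Complex Function

theorem eq_of_forall_hasDerivAt_comp_linear {V : Type*} [AddCommGroup V] [Module ℂ V]
    [Module.Finite ℂ V] (A : Module.End ℂ V) {u v : ℝ → V}
    (hu : ∀ (φ : V →ₗ[ℂ] ℂ) (t : ℝ), HasDerivAt (fun s => φ (u s)) (φ (A (u t))) t)
    (hv : ∀ (φ : V →ₗ[ℂ] ℂ) (t : ℝ), HasDerivAt (fun s => φ (v s)) (φ (A (v t))) t)
    (h0 : u 0 = v 0) : u = v := by
  -- transport to coordinates, where the equation is a Lipschitz ODE in a normed space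
  let e := (Module.Free.chooseBasis ℂ V).equivFun
  let A' := LinearMap.toContinuousLinearMap (e.toLinearMap ∘ₗ A ∘ₗ e.symm.toLinearMap)
  have hcoord : ∀ w : ℝ → V, (∀ (φ : V →ₗ[ℂ] ℂ) (t : ℝ),
      HasDerivAt (fun s => φ (w s)) (φ (A (w t))) t) →
      ∀ t, HasDerivAt (fun s => e (w s)) (A' (e (w t))) t ∧ e (w t) ∈ Set.univ := by
    intro w hw t
    refine ⟨hasDerivAt_pi.mpr fun i => ?_, trivial⟩
    simpa [A'] using hw (LinearMap.proj i ∘ₗ e.toLinearMap) t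
  have := ODE_solution_unique_univ (v := fun _ => A') (s := fun _ => Set.univ) (t₀ := 0)
    (fun _ => A'.lipschitz.lipschitzOnWith) (hcoord u hu) (hcoord v hv) (by rw [h0])
  funext t
  exact e.injective (congrFun this t)

theorem hasDerivAt_finsum_exp_smul {V : Type*} [AddCommGroup V] [Module ℂ V]
    (A : Module.End ℂ V) {z : ℝ → V} (hz : (support z).Finite)
    (hA : ∀ l, A (z l) = (l : ℂ) • z l) (φ : V →ₗ[ℂ] ℂ) (t : ℝ) :
    HasDerivAt (fun s => φ (∑ᶠ l, (Real.exp (l * s) : ℂ) • z l))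
      (φ (A (∑ᶠ l, (Real.exp (l * t) : ℂ) • z l))) t := by
  have hsupp : ∀ s : ℝ, support (fun l => (Real.exp (l * s) : ℂ) • z l) ⊆ hz.toFinset :=
    fun _ => (support_smul_subset_right _ z).trans (by simp)
  simp only [finsum_eq_sum_of_support_subset _ (hsupp _), map_sum, map_smul, hA, smul_smul]
  refine HasDerivAt.fun_sum fun l _ => ?_
  have hexp : HasDerivAt (fun s : ℝ => (Real.exp (l * s) : ℂ)) (l * Real.exp (l * t)) t := by
    simpa [mul_comm] using (((hasDerivAt_id t).const_mul l).exp).ofReal_comp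
  simpa [smul_eq_mul, mul_comm, mul_left_comm] using hexp.mul_const (φ (z l))

theorem Module.End.eq_of_finsum_eq_of_apply_eq_smul {R M ι : Type*} [CommRing R] [IsDomain R]
    [AddCommGroup M] [Module R M] [Module.IsTorsionFree R M] (f : Module.End R M) {μ : ι → R}
    (hμ : Function.Injective μ) {w w' : ι → M} (hw : (Function.support w).Finite)
    (hw' : (Function.support w').Finite)
    (hfw : ∀ i, f (w i) = μ i • w i) (hfw' : ∀ i, f (w' i) = μ i • w' i)
    (h : ∑ᶠ i, w i = ∑ᶠ i, w' i) : w = w' := by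
  classical
  have hindep := (iSupIndep_iff_finsetSum_eq_zero_imp_eq_zero _).mp
    ((f.eigenspaces_iSupIndep).comp hμ)
  let s := hw.toFinset ∪ hw'.toFinset
  have hsum : ∑ i ∈ s, (w i - w' i) = 0 := by
    rw [Finset.sum_sub_distrib, ← finsum_eq_sum_of_support_subset w (by simp [s]),
      ← finsum_eq_sum_of_support_subset w' (by simp [s]), h, sub_self]
  funext i
  by_cases hi : i ∈ s
  · refine sub_eq_zero.mp (hindep s _ (fun j _ => ?_) hsum i hi)
    simp [hfw, hfw', smul_sub]
  · simp only [s, Finset.mem_union, Set.Finite.mem_toFinset, mem_support, not_or,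
      not_not] at hi
    rw [hi.1, hi.2]

theorem LieModule.traceForm_eq_zero_of_lie_eq_smul {R L M : Type*} [CommRing R]
    [NoZeroDivisors R] [LieRing L] [LieAlgebra R L] [AddCommGroup M] [Module R M]
    [LieRingModule L M] [LieModule R L M] {z x y : L} {p q : R}
    (hx : ⁅z, x⁆ = p • x) (hy : ⁅z, y⁆ = q • y) (hpq : p + q ≠ 0) :
    traceForm R L M x y = 0 := by
  have h := traceForm_apply_lie_apply' R L M z x y
  rw [hx, hy, map_smul, map_smul, LinearMap.smul_apply, smul_eq_mul, smul_eq_mul,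
    ← add_eq_zero_iff_eq_neg, ← add_mul] at h
  exact (mul_eq_zero.mp h).resolve_left hpq

theorem LinearMap.IsOrthoᵢ.apply_finsum_smul_self {R M ι : Type*} [CommSemiring R]
    [AddCommMonoid M] [Module R M] {I : R →+* R} {B : M →ₗ[R] M →ₛₗ[I] R} {v : ι → M}
    (hB : B.IsOrthoᵢ v) (hv : (support v).Finite) (c : ι → R) :
    B (∑ᶠ i, c i • v i) (∑ᶠ i, c i • v i) = ∑ᶠ i, c i * I (c i) * B (v i) (v i) := by
  classical
  have hsupp : support (fun i => c i • v i) ⊆ hv.toFinset :=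
    (support_smul_subset_right c v).trans (by simp)
  have hsupp' : support (fun i => c i * I (c i) * B (v i) (v i)) ⊆ hv.toFinset := by
    intro i hi
    by_contra hvi
    simp_all
  rw [finsum_eq_sum_of_support_subset _ hsupp, finsum_eq_sum_of_support_subset _ hsupp',
    map_sum B, LinearMap.sum_apply]
  refine Finset.sum_congr rfl fun i _ => ?_
  rw [map_sum, Finset.sum_eq_single i (fun j _ hji => by
    simp [show B (v i) (v j) = 0 from hB (Ne.symm hji)]) (by simp_all)]
  simp only [map_smulₛₗ, LinearMap.smul_apply, smul_eq_mul, RingHom.id_apply]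
  ring

theorem lie_neg_smul_of_map_eq_neg {R L : Type*} [CommRing R] [LieRing L] [LieAlgebra R L]
    (θ : L →ₗ⁅R⁆ L) {ξ x : L} {c : R} (hξ : θ ξ = -ξ) (hx : ⁅ξ, x⁆ = c • x) :
    ⁅ξ, θ x⁆ = (-c) • θ x := by
  have h := congrArg θ hx
  rw [LieHom.map_lie, hξ, neg_lie, map_smul] at h
  rw [neg_smul, ← h, neg_neg]

section MomentMap

variable {g : Type*} [LieRing g] [LieAlgebra ℂ g]

noncomputable def hermitianForm (θ : g →ₗ⁅ℂ⁆ g) (σ : g →ₗ⋆[ℂ] g) : g →ₗ[ℂ] g →ₗ⋆[ℂ] ℂ :=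
  -(killingForm ℂ g).compl₂ (θ.toLinearMap ∘ₛₗ σ)

theorem hermitianForm_apply (θ : g →ₗ⁅ℂ⁆ g) (σ : g →ₗ⋆[ℂ] g) (x y : g) :
    hermitianForm θ σ x y = -killingForm ℂ g x (θ (σ y)) := rfl

noncomputable def momentMap (θ : g →ₗ⁅ℂ⁆ g) (σ : g →ₗ⋆[ℂ] g) (x : g) : g :=
  -(hermitianForm θ σ x x)⁻¹ • ⁅x, θ (σ x)⁆

noncomputable def eigenComponents (ξ : g) (ec : ℝ → g) (l : ℝ) : g :=
  if l = 0 then ξ + I • ec 0 else I • ec l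

variable {σ : g →ₗ⋆[ℂ] g} {θ : g →ₗ⁅ℂ⁆ g} {ξ u : g} {ec : ℝ → g}

theorem lie_conj_eq_smul (hσ : ∀ x y, σ ⁅x, y⁆ = ⁅σ x, σ y⁆) (hξ : σ ξ = ξ) {x : g} {l : ℝ}
    (hx : ⁅ξ, x⁆ = (l : ℂ) • x) : ⁅ξ, σ x⁆ = (l : ℂ) • σ x := by
  rw [← hξ, ← hσ, hx, map_smulₛₗ, conj_ofReal]

theorem hermitianForm_eq_zero_of_lie_eq_smul (hσ : ∀ x y, σ ⁅x, y⁆ = ⁅σ x, σ y⁆) (hξσ : σ ξ = ξ)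
    (hξθ : θ ξ = -ξ) {x y : g} {p q : ℝ}
    (hx : ⁅ξ, x⁆ = (p : ℂ) • x) (hy : ⁅ξ, y⁆ = (q : ℂ) • y) (hpq : p ≠ q) :
    hermitianForm θ σ x y = 0 := by
  have hy' := lie_neg_smul_of_map_eq_neg θ hξθ (lie_conj_eq_smul hσ hξσ hy)
  rw [hermitianForm_apply, LieModule.traceForm_eq_zero_of_lie_eq_smul hx hy', neg_zero]
  rw [← sub_eq_add_neg, sub_ne_zero]
  exact_mod_cast hpq

theorem conj_eigencomponent_eq (hσ : ∀ x y, σ ⁅x, y⁆ = ⁅σ x, σ y⁆) (hξ : σ ξ = ξ)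
    (hfin : (support ec).Finite) (heig : ∀ l : ℝ, ⁅ξ, ec l⁆ = (l : ℂ) • ec l)
    (hsum : σ (∑ᶠ l, ec l) = ∑ᶠ l, ec l) (l : ℝ) : σ (ec l) = ec l :=
  congrFun ((LieAlgebra.ad ℂ g ξ).eq_of_finsum_eq_of_apply_eq_smul ofReal_injective
    (hfin.subset (support_comp_subset (map_zero σ) ec)) hfin
    (fun l => lie_conj_eq_smul hσ hξ (heig l)) heig (by rw [← hsum, map_finsum σ hfin]; rfl)) l

theorem theta_eigencomponent_eq (hξ : θ ξ = -ξ)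
    (hfin : (support ec).Finite) (heig : ∀ l : ℝ, ⁅ξ, ec l⁆ = (l : ℂ) • ec l)
    (hsum : θ (∑ᶠ l, ec l) = -∑ᶠ l, ec l) (l : ℝ) : θ (ec l) = -ec (-l) := by
  have hfin' : (support fun l => -θ (ec (-l))).Finite :=
    (hfin.preimage neg_injective.injOn).subset fun l hl => mt (fun h => by simp [h]) hl
  have heig' : ∀ l : ℝ, ⁅ξ, -θ (ec (-l))⁆ = (l : ℂ) • -θ (ec (-l)) := fun l => by
    rw [lie_neg, lie_neg_smul_of_map_eq_neg θ hξ (heig (-l)), smul_neg, ofReal_neg, neg_neg]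
  have hneg : ∑ᶠ l, ec (-l) = ∑ᶠ l, ec l := finsum_comp_equiv (Equiv.neg ℝ)
  have h := congrFun ((LieAlgebra.ad ℂ g ξ).eq_of_finsum_eq_of_apply_eq_smul ofReal_injective
    hfin' hfin heig' heig (by
      rw [finsum_neg_distrib, ← map_finsum θ (hfin.preimage neg_injective.injOn),
        hneg, hsum, neg_neg])) (-l)
  rw [neg_neg] at h
  rw [← h, neg_neg]

theorem lie_sub_theta_finsum (hfin : (support ec).Finite)
    (heig : ∀ l : ℝ, ⁅ξ, ec l⁆ = (l : ℂ) • ec l)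
    (hθ : ∀ l, θ (ec l) = -ec (-l)) (a : ℝ → ℂ) :
    ⁅ξ, (∑ᶠ l, a l • ec l) - θ (∑ᶠ l, a l • ec l)⁆ =
      ∑ᶠ l : ℝ, ((l : ℂ) * (a l + a (-l))) • ec l := by
  have hfin_smul : ∀ c : ℝ → ℂ, (support fun l => c l • ec l).Finite := fun c =>
    hfin.subset (support_smul_subset_right c ec)
  have hneg : ∑ᶠ l, a l • ec (-l) = ∑ᶠ l, a (-l) • ec l := by
    rw [← finsum_comp_equiv (Equiv.neg ℝ)]
    simp
  have hθsum : θ (∑ᶠ l, a l • ec l) = -∑ᶠ l, a (-l) • ec l := by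
    simp only [map_finsum θ (hfin_smul a), map_smul, hθ, smul_neg, finsum_neg_distrib, hneg]
  rw [hθsum, sub_neg_eq_add, ← finsum_add_distrib (hfin_smul _) (hfin_smul _)]
  have := map_finsum (LieAlgebra.ad ℂ g ξ) (hfin_smul fun l => a l + a (-l))
  simp only [LieAlgebra.ad_apply, lie_smul, heig, smul_smul, ← add_smul] at this ⊢
  rw [this]
  simp only [mul_comm]

theorem eigenComponents_eq_single_add (l : ℝ) :
    eigenComponents ξ ec l = (Pi.single 0 ξ : ℝ → g) l + I • ec l := by
  by_cases hl : l = 0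
  · subst hl; simp [eigenComponents]
  · simp [eigenComponents, hl]

theorem lie_eigenComponents (heig : ∀ l : ℝ, ⁅ξ, ec l⁆ = (l : ℂ) • ec l) (l : ℝ) :
    ⁅ξ, eigenComponents ξ ec l⁆ = (l : ℂ) • eigenComponents ξ ec l := by
  by_cases hl : l = 0
  · subst hl; simp [eigenComponents, heig]
  · simp [eigenComponents, hl, heig, smul_comm (l : ℂ) I]

theorem finite_support_eigenComponents (hfin : (support ec).Finite) :
    (support (eigenComponents ξ ec)).Finite :=
  ((Set.finite_singleton 0).union hfin).subset fun l hl => by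
    by_contra h
    simp_all [eigenComponents]

theorem finsum_smul_eigenComponents (hfin : (support ec).Finite) (c : ℝ → ℂ) :
    ∑ᶠ l, c l • eigenComponents ξ ec l = c 0 • ξ + I • ∑ᶠ l, c l • ec l := by
  have hfin' : (support fun l => c l • ec l).Finite :=
    hfin.subset (support_smul_subset_right c ec)
  simp_rw [eigenComponents_eq_single_add, smul_add, smul_comm (c _) I]
  rw [finsum_add_distrib, finsum_eq_single _ 0, ← smul_finsum' I hfin']
  · simp
  · intro l hl; simp [hl]
  · exact (Set.finite_singleton 0).subset fun l hl => by by_contra h; simp_all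
  · exact hfin'.subset (support_smul_subset_right _ _)

theorem lie_theta_conj_sub_conj (hσ : ∀ x y, σ ⁅x, y⁆ = ⁅σ x, σ y⁆)
    (hθσ : ∀ x, θ (σ x) = σ (θ x)) (hξσ : σ ξ = ξ) (hξθ : θ ξ = -ξ) (hu : σ u = u) :
    ⁅ξ + I • u, θ (σ (ξ + I • u))⁆ - σ ⁅ξ + I • u, θ (σ (ξ + I • u))⁆ =
      (2 * I) • ⁅ξ, u - θ u⁆ := by
  have hσθu : σ (θ u) = θ u := by rw [← hθσ, hu]
  have hσx : σ (ξ + I • u) = ξ - I • u := by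
    rw [map_add, map_smulₛₗ, hξσ, hu, conj_I, neg_smul, sub_eq_add_neg]
  have hθσx : θ (σ (ξ + I • u)) = -ξ - I • θ u := by
    rw [hσx, map_sub, map_smul, hξθ]
  have hσθσx : σ (-ξ - I • θ u) = -ξ + I • θ u := by
    rw [map_sub, map_neg, map_smulₛₗ, hξσ, hσθu, conj_I, neg_smul, sub_neg_eq_add]
  rw [hθσx, hσ, hσx, hσθσx]
  have hskew : ⁅u, ξ⁆ = -⁅ξ, u⁆ := (lie_skew u ξ).symm
  simp only [lie_add, add_lie, lie_sub, sub_lie, lie_smul, smul_lie, lie_neg, lie_self, hskew,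
    smul_neg]
  module

theorem half_smul_sub_conj_momentMap (hσ : ∀ x y, σ ⁅x, y⁆ = ⁅σ x, σ y⁆)
    (hθσ : ∀ x, θ (σ x) = σ (θ x)) (hξσ : σ ξ = ξ) (hξθ : θ ξ = -ξ) (hu : σ u = u)
    (hreal : starRingEnd ℂ (hermitianForm θ σ (ξ + I • u) (ξ + I • u)) =
      hermitianForm θ σ (ξ + I • u) (ξ + I • u)) :
    (2⁻¹ : ℂ) • (momentMap θ σ (ξ + I • u) - σ (momentMap θ σ (ξ + I • u))) =
      -(hermitianForm θ σ (ξ + I • u) (ξ + I • u))⁻¹ • I • ⁅ξ, u - θ u⁆ := by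
  rw [momentMap, map_smulₛₗ, map_neg, map_inv₀, hreal, ← smul_sub,
    lie_theta_conj_sub_conj hσ hθσ hξσ hξθ hu, smul_smul, smul_smul, smul_smul]
  congr 1
  ring

theorem eq_finsum_exp_smul_eigenComponents_of_hasDerivAt [Module.Finite ℂ g]
    (hfin : (support ec).Finite) (heig : ∀ l : ℝ, ⁅ξ, ec l⁆ = (l : ℂ) • ec l) {f : ℝ → g}
    (hf0 : f 0 = ξ + I • ∑ᶠ l, ec l)
    (hflow : ∀ (φ : g →ₗ[ℂ] ℂ) (t : ℝ), HasDerivAt (fun s => φ (f s)) (φ ⁅ξ, f t⁆) t) :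
    f = fun s => ∑ᶠ l, (Real.exp (l * s) : ℂ) • eigenComponents ξ ec l :=
  eq_of_forall_hasDerivAt_comp_linear (LieAlgebra.ad ℂ g ξ) hflow
    (hasDerivAt_finsum_exp_smul _ (finite_support_eigenComponents hfin)
      (lie_eigenComponents heig))
    (by simpa [hf0] using (finsum_smul_eigenComponents hfin 1).symm)

theorem half_smul_sub_conj_momentMap_finsum (hσ : ∀ x y, σ ⁅x, y⁆ = ⁅σ x, σ y⁆)
    (hθσ : ∀ x, θ (σ x) = σ (θ x)) (hξσ : σ ξ = ξ) (hξθ : θ ξ = -ξ)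
    (hfin : (support ec).Finite) (heig : ∀ l : ℝ, ⁅ξ, ec l⁆ = (l : ℂ) • ec l)
    (hσec : ∀ l, σ (ec l) = ec l) (hθec : ∀ l, θ (ec l) = -ec (-l)) {a : ℝ → ℝ} (ha : a 0 = 1)
    {x : g} (hx : x = ∑ᶠ l, (a l : ℂ) • eigenComponents ξ ec l)
    (hreal : starRingEnd ℂ (hermitianForm θ σ x x) = hermitianForm θ σ x x) :
    (2⁻¹ : ℂ) • (momentMap θ σ x - σ (momentMap θ σ x)) =
      -(hermitianForm θ σ x x)⁻¹ •
        ∑ᶠ l : ℝ, ((l * (a l + a (-l)) : ℝ) : ℂ) • eigenComponents ξ ec l := by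
  have hfin_a : (support fun l => (a l : ℂ) • ec l).Finite :=
    hfin.subset (support_smul_subset_right _ ec)
  have hσu : σ (∑ᶠ l, (a l : ℂ) • ec l) = ∑ᶠ l, (a l : ℂ) • ec l := by
    rw [map_finsum σ hfin_a]
    exact finsum_congr fun l => by rw [map_smulₛₗ, hσec, conj_ofReal]
  rw [finsum_smul_eigenComponents hfin, ha, ofReal_one, one_smul] at hx
  subst hx
  rw [half_smul_sub_conj_momentMap hσ hθσ hξσ hξθ hσu hreal, lie_sub_theta_finsum hfin heig hθec,
    finsum_smul_eigenComponents hfin]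
  push_cast
  rw [zero_mul, zero_smul, zero_add]

end MomentMap

theorem moment_map_ik_component_along_flow_general
    (g : Type*) [LieRing g] [LieAlgebra ℂ g] [Module.Finite ℂ g]
    (conj' : g → g) (hconj_add : ∀ x y, conj' (x + y) = conj' x + conj' y)
    (hconj_smul : ∀ (c : ℂ) (x : g), conj' (c • x) = (starRingEnd ℂ) c • conj' x)
    (hconj_brk : ∀ x y : g, conj' ⁅x, y⁆ = ⁅conj' x, conj' y⁆)
    (θ : g →ₗ⁅ℂ⁆ g)
    (hθconj : ∀ x, θ (conj' x) = conj' (θ x))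
    (hip : g → g → ℂ)
    (hhip : ∀ x y, hip x y = -(killingForm ℂ g x (θ (conj' y))))
    (hposdef : ∀ x : g, x ≠ 0 → 0 < (hip x x).re ∧ (hip x x).im = 0)
    (ξ η : g) (hξreal : conj' ξ = ξ) (hηreal : conj' η = η)
    (hξp : θ ξ = -ξ) (hηp : θ η = -η)
    (ec : ℝ → g) (hfin : (Function.support ec).Finite)
    (heig : ∀ l : ℝ, ⁅ξ, ec l⁆ = (l : ℂ) • ec l)
    (hsum : η = ∑ᶠ l : ℝ, ec l)
    (ζ : g) (hζ : ζ = ξ + I • η)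
    (ζc : ℝ → g)
    (hζc : ∀ l : ℝ, ζc l = if l = 0 then ξ + I • ec 0 else I • ec l)
    (f : ℝ → g) (hf0 : f 0 = ζ)
    (hflow : ∀ (φ : g →ₗ[ℂ] ℂ) (t : ℝ),
      HasDerivAt (fun s => φ (f s)) (φ ⁅ξ, f t⁆) t)
    (m m₃ : ℝ → g)
    (hm : ∀ t, m t = -(hip (f t) (f t))⁻¹ • ⁅f t, θ (conj' (f t))⁆)
    (hm₃ : ∀ t, m₃ t = (2⁻¹ : ℂ) • (m t - conj' (m t))) :
    ∀ t : ℝ,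
      hip (m₃ t) (m₃ t) =
        (∑ᶠ l : ℝ, ((l ^ 2 * (Real.exp (l * t) + Real.exp (-(l * t))) ^ 2 : ℝ) : ℂ) *
            hip (ζc l) (ζc l)) /
          (∑ᶠ l : ℝ, ((Real.exp (2 * l * t) : ℝ) : ℂ) * hip (ζc l) (ζc l)) ^ 2 := by
  intro t
  let σ : g →ₗ⋆[ℂ] g := ⟨⟨conj', hconj_add⟩, hconj_smul⟩
  obtain rfl : hip = fun x y => hermitianForm θ σ x y := funext₂ hhip
  obtain rfl : ζc = eigenComponents ξ ec := funext hζc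
  beta_reduce at hposdef hm ⊢
  have hσec := conj_eigencomponent_eq (σ := σ) hconj_brk hξreal hfin heig (hsum ▸ hηreal)
  have hθec := theta_eigencomponent_eq hξp hfin heig (hsum ▸ hηp)
  have hreal : ∀ x, starRingEnd ℂ (hermitianForm θ σ x x) = hermitianForm θ σ x x := fun x => by
    rcases eq_or_ne x 0 with rfl | hx
    · simp
    · exact conj_eq_iff_im.mpr (hposdef x hx).2
  have horth : (hermitianForm θ σ).IsOrthoᵢ (eigenComponents ξ ec) := fun l l' hne =>
    hermitianForm_eq_zero_of_lie_eq_smul hconj_brk hξreal hξp (lie_eigenComponents heig l)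
      (lie_eigenComponents heig l') hne
  have hf := eq_finsum_exp_smul_eigenComponents_of_hasDerivAt hfin heig (hsum ▸ hζ ▸ hf0) hflow
  have hm₃t : m₃ t = -(hermitianForm θ σ (f t) (f t))⁻¹ • ∑ᶠ l : ℝ,
      ((l * (Real.exp (l * t) + Real.exp (-l * t)) : ℝ) : ℂ) • eigenComponents ξ ec l :=
    (hm₃ t).trans <| (hm t).symm ▸ half_smul_sub_conj_momentMap_finsum hconj_brk hθconj hξreal
      hξp hfin heig hσec hθec (a := fun l => Real.exp (l * t)) (by simp) (congrFun hf t) (hreal _)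
  have hsq : ∀ r : ℝ, (r : ℂ) * starRingEnd ℂ r = ((r ^ 2 : ℝ) : ℂ) := fun r => by
    rw [conj_ofReal, ← ofReal_mul, sq]
  have hexp : ∀ l, Real.exp (l * t) ^ 2 = Real.exp (2 * l * t) := fun l => by
    rw [← Real.exp_nat_mul]; ring_nf
  rw [hm₃t, LinearMap.map_smul₂, map_smulₛₗ, map_neg, map_inv₀, hreal, congrFun hf t,
    horth.apply_finsum_smul_self (finite_support_eigenComponents hfin),
    horth.apply_finsum_smul_self (finite_support_eigenComponents hfin)]
  simp only [hsq, mul_pow, hexp, neg_mul, smul_eq_mul]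
  ring

/-- Let `ζ = ξ + iη` be nilpotent in the complexification `g` of
`g_R`, with `ξ, η ∈ p_R`, `η = Σ_λ η_λ` the `ad ξ`-eigendecomposition, and set
`ζ_λ = i·η_λ` for `λ ≠ 0`, `ζ_0 = ξ + i·η_0`.  Then the squared Hermitian norm
of the `i·k_R`-component `m₃(t) = ½(m(f t) - conj'(m(f t)))` of the moment map
`m(x) = -[x, θ(x̄)]/‖x‖²` along the instanton flow
`f t = Ad(exp(tξ))(ζ)` (characterized by `f 0 = ζ`, `f' = [ξ, f]`) is
`‖m₃(t)‖² = (Σ_λ λ²(e^{λt}+e^{-λt})²‖ζ_λ‖²) / (Σ_λ e^{2λt}‖ζ_λ‖²)²`. -/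
theorem moment_map_ik_component_along_flow
    (g : Type*) [LieRing g] [LieAlgebra ℂ g] [Module.Finite ℂ g]
    [LieAlgebra.IsSemisimple ℂ g]
    (conj' : g → g) (hconj_add : ∀ x y, conj' (x + y) = conj' x + conj' y)
    (hconj_smul : ∀ (c : ℂ) (x : g), conj' (c • x) = (starRingEnd ℂ) c • conj' x)
    (hconj_brk : ∀ x y : g, conj' ⁅x, y⁆ = ⁅conj' x, conj' y⁆)
    (hconj_inv : ∀ x, conj' (conj' x) = x)
    (θ : g →ₗ⁅ℂ⁆ g) (hθinv : ∀ x, θ (θ x) = x)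
    (hθconj : ∀ x, θ (conj' x) = conj' (θ x))
    (hip : g → g → ℂ)
    (hhip : ∀ x y, hip x y = -(killingForm ℂ g x (θ (conj' y))))
    (hposdef : ∀ x : g, x ≠ 0 → 0 < (hip x x).re ∧ (hip x x).im = 0)
    (ξ η : g) (hξreal : conj' ξ = ξ) (hηreal : conj' η = η)
    (hξp : θ ξ = -ξ) (hηp : θ η = -η)
    (ec : ℝ → g) (hfin : (Function.support ec).Finite)
    (heig : ∀ l : ℝ, ⁅ξ, ec l⁆ = (l : ℂ) • ec l)
    (hsum : η = ∑ᶠ l : ℝ, ec l)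
    (ζ : g) (hζ : ζ = ξ + I • η) (hζ0 : ζ ≠ 0)
    (hnil : IsNilpotent (LieAlgebra.ad ℂ g ζ))
    (ζc : ℝ → g)
    (hζc : ∀ l : ℝ, ζc l = if l = 0 then ξ + I • ec 0 else I • ec l)
    (f : ℝ → g) (hf0 : f 0 = ζ)
    (hflow : ∀ (φ : g →ₗ[ℂ] ℂ) (t : ℝ),
      HasDerivAt (fun s => φ (f s)) (φ ⁅ξ, f t⁆) t)
    (m m₃ : ℝ → g)
    (hm : ∀ t, m t = -(hip (f t) (f t))⁻¹ • ⁅f t, θ (conj' (f t))⁆)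
    (hm₃ : ∀ t, m₃ t = (2⁻¹ : ℂ) • (m t - conj' (m t))) :
    ∀ t : ℝ,
      hip (m₃ t) (m₃ t) =
        (∑ᶠ l : ℝ, ((l ^ 2 * (Real.exp (l * t) + Real.exp (-(l * t))) ^ 2 : ℝ) : ℂ) *
            hip (ζc l) (ζc l)) /
          (∑ᶠ l : ℝ, ((Real.exp (2 * l * t) : ℝ) : ℂ) * hip (ζc l) (ζc l)) ^ 2 :=
  moment_map_ik_component_along_flow_general g conj' hconj_add hconj_smul hconj_brk θ hθconj hip
    hhip hposdef ξ η hξreal hηreal hξp hηp ec hfin heig hsum ζ hζ ζc hζc f hf0 hflow m m₃ hm hm₃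
end

section
/- Let Φ ∈ Hom(s, g(r)) be a linear map from s = sl(2,ℂ) into the s-isotypic component g(r) of highest weight r of a complex semisimple Lie algebra g containing s, such that Φ is isotypic of type r-2 for the diagonal s-action. Then the component of Φ(h) in the weight space g(r,±r) vanishes, and for the weight components: (Φe)_{ℓ+2} = (-1/(r-ℓ))·[e, (Φh)_ℓ] and (Φf)_{ℓ-2} = (1/(r+ℓ))·[f, (Φh)_ℓ], where (x)_ℓ denotes the h-weight-ℓ component in g(r). -/
/-- The diagonal action of an element `x` of `s` on `Hom(s, g)`,
`(x·Φ)(u) = [ι x, Φ u] - Φ [x, u]`, where `ι : s → g` is the embedding. -/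
noncomputable def diagAct {S g : Type*} [LieRing S] [LieAlgebra ℂ S]
    [LieRing g] [LieAlgebra ℂ g] (ι : S →ₗ⁅ℂ⁆ g) (x : S) (Φ : S →ₗ[ℂ] g) :
    S →ₗ[ℂ] g :=
  ((LieAlgebra.ad ℂ g (ι x)) ∘ₗ Φ) - (Φ ∘ₗ (LieAlgebra.ad ℂ S x))

/-- The Casimir operator `Ω = 2(ad e)(ad f) + 2(ad f)(ad e) + (ad h)²` of an
sl₂-triple `e, f, h` inside `g`, acting on `g`.  Its eigenspace for the
eigenvalue `r² + 2r` is the isotypic component `g(r)` of highest weight `r`. -/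
noncomputable def casimirOp {g : Type*} [LieRing g] [LieAlgebra ℂ g]
    (e f h : g) : Module.End ℂ g :=
  (2 : ℂ) • ((LieAlgebra.ad ℂ g e) ∘ₗ (LieAlgebra.ad ℂ g f)) +
    (2 : ℂ) • ((LieAlgebra.ad ℂ g f) ∘ₗ (LieAlgebra.ad ℂ g e)) +
    ((LieAlgebra.ad ℂ g h) ∘ₗ (LieAlgebra.ad ℂ g h))

/-- The Casimir operator of `s = sl(2,ℂ)` acting on `Hom(s, g)` via the
diagonal action. -/
noncomputable def casimirDiag {S g : Type*} [LieRing S] [LieAlgebra ℂ S]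
    [LieRing g] [LieAlgebra ℂ g] (ι : S →ₗ⁅ℂ⁆ g) (es fs hs : S)
    (Φ : S →ₗ[ℂ] g) : S →ₗ[ℂ] g :=
  (2 : ℂ) • diagAct ι es (diagAct ι fs Φ) +
    (2 : ℂ) • diagAct ι fs (diagAct ι es Φ) +
    diagAct ι hs (diagAct ι hs Φ)

/-!
By the Casimir computation, isotypy of type `r - 2` says
`(r + 2) Φ u = [e, Φ [f, u]] + [f, Φ [e, u]] + ½ [h, Φ [h, u]]`. At `u = h, e, f` this gives three
identities in `g`, and since `ad h`-eigenvectors for distinct eigenvalues are independent, they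
hold weight by weight:
`(r - ℓ) (Φe)_{ℓ+2} = -[e, (Φh)_ℓ]`, `(r + ℓ) (Φf)_{ℓ-2} = [f, (Φh)_ℓ]` and
`(r + 2) (Φh)_ℓ = 2 [e, (Φf)_{ℓ-2}] - 2 [f, (Φe)_{ℓ+2}]`.

The Casimir eigenspace for `r² + 2r` has no weights outside `[-r, r]`: the Casimir commutes with
`ad e`, and on a vector of weight `ℓ > r` it makes `ad f ∘ ad e` a nonzero scalar, so the `e`-string
through a nonzero such vector never ends, which finite dimension forbids. This settles the formulas
at `ℓ = ±r`. At weight `r`, the third identity and `[e, [f, x]] = r x` give `2r(r + 1) (Φh)_r = 0`;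
weight `-r` is symmetric.
-/

theorem eq_inv_smul_of_smul_eq {K V : Type*} [Field K] [AddCommGroup V] [Module K V] {c : K}
    {a b : V} (hab : c • a = b) (ha : c = 0 → a = 0) : a = c⁻¹ • b := by
  rcases eq_or_ne c 0 with rfl | hc
  · rw [ha rfl, inv_zero, zero_smul]
  · rw [← hab, inv_smul_smul₀ hc]

section Sl2

variable {g : Type*} [LieRing g] [LieAlgebra ℂ g]

theorem casimirOp_apply (e f h x : g) :
    casimirOp e f h x = (2 : ℂ) • ⁅e, ⁅f, x⁆⁆ + (2 : ℂ) • ⁅f, ⁅e, x⁆⁆ + ⁅h, ⁅h, x⁆⁆ := by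
  simp [casimirOp]

theorem casimirOp_swap (e f h : g) : casimirOp f e (-h) = casimirOp e f h := by
  ext x
  simp only [casimirOp_apply, neg_lie, lie_neg, neg_neg]
  abel

theorem lie_lie_eq_smul_of_lie_eq_smul {h e x : g} {a c : ℂ} (he : ⁅h, e⁆ = a • e)
    (hx : ⁅h, x⁆ = c • x) : ⁅h, ⁅e, x⁆⁆ = (a + c) • ⁅e, x⁆ := by
  rw [leibniz_lie, he, hx, smul_lie, lie_smul, add_smul]

variable {e f h : g}

theorem casimirOp_lie_comm (hhe : ⁅h, e⁆ = (2 : ℂ) • e) (hef : ⁅e, f⁆ = h) (x : g) :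
    casimirOp e f h ⁅e, x⁆ = ⁅e, casimirOp e f h x⁆ := by
  have hfe : ∀ y : g, ⁅f, ⁅e, y⁆⁆ = ⁅e, ⁅f, y⁆⁆ - ⁅h, y⁆ := fun y => by
    rw [← hef, lie_lie]; abel
  have hhe' : ∀ y : g, ⁅h, ⁅e, y⁆⁆ = ⁅e, ⁅h, y⁆⁆ + (2 : ℂ) • ⁅e, y⁆ := fun y => by
    rw [leibniz_lie, hhe, smul_lie]; abel
  simp only [casimirOp_apply, hfe, hhe', lie_add, lie_sub, lie_smul]
  module

theorem four_smul_lie_e_lie_f_of_casimir (hef : ⁅e, f⁆ = h) {ρ c : ℂ} {x : g}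
    (hcas : casimirOp e f h x = (ρ ^ 2 + 2 * ρ) • x) (hx : ⁅h, x⁆ = c • x) :
    (4 : ℂ) • ⁅e, ⁅f, x⁆⁆ = ((ρ + c) * (ρ - c + 2)) • x := by
  have hcomm : ⁅e, ⁅f, x⁆⁆ - ⁅f, ⁅e, x⁆⁆ = c • x := by rw [← lie_lie, hef, hx]
  rw [casimirOp_apply, hx, lie_smul, hx, smul_smul] at hcas
  linear_combination (norm := module) hcas + (2 : ℂ) • hcomm

theorem four_smul_lie_f_lie_e_of_casimir (hef : ⁅e, f⁆ = h) {ρ c : ℂ} {x : g}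
    (hcas : casimirOp e f h x = (ρ ^ 2 + 2 * ρ) • x) (hx : ⁅h, x⁆ = c • x) :
    (4 : ℂ) • ⁅f, ⁅e, x⁆⁆ = ((ρ - c) * (ρ + c + 2)) • x := by
  have hcomm : ⁅e, ⁅f, x⁆⁆ - ⁅f, ⁅e, x⁆⁆ = c • x := by rw [← lie_lie, hef, hx]
  rw [casimirOp_apply, hx, lie_smul, hx, smul_smul] at hcas
  linear_combination (norm := module) hcas - (2 : ℂ) • hcomm

theorem eq_zero_of_casimir_of_highest_weight (hef : ⁅e, f⁆ = h) {r : ℕ} (hr : 0 < r) {x y : g}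
    (hcas : casimirOp e f h x = ((r : ℂ) ^ 2 + 2 * r) • x) (hx : ⁅h, x⁆ = (r : ℂ) • x)
    (hxy : ((r : ℂ) + 2) • x = (2 : ℂ) • ⁅e, y⁆) (hy : ((r : ℂ) + r) • y = ⁅f, x⁆) :
    x = 0 := by
  have hef_x := four_smul_lie_e_lie_f_of_casimir hef hcas hx
  rw [← hy, lie_smul] at hef_x
  have hx0 : ((2 * r * (r + 1) : ℕ) : ℂ) • x = 0 := by
    push_cast
    linear_combination (norm := module) (2 * (r : ℂ)) • hxy + (2⁻¹ : ℂ) • hef_x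
  exact (smul_eq_zero.mp hx0).resolve_left (Nat.cast_ne_zero.mpr (by positivity))

theorem eq_zero_of_casimir_of_lowest_weight (hef : ⁅e, f⁆ = h) {r : ℕ} (hr : 0 < r) {x y : g}
    (hcas : casimirOp e f h x = ((r : ℂ) ^ 2 + 2 * r) • x) (hx : ⁅h, x⁆ = -(r : ℂ) • x)
    (hxy : ((r : ℂ) + 2) • x = -(2 : ℂ) • ⁅f, y⁆) (hy : ((r : ℂ) + r) • y = -⁅e, x⁆) :
    x = 0 :=
  eq_zero_of_casimir_of_highest_weight (e := f) (f := e) (h := -h) (y := -y)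
    (by rw [← lie_skew, hef]) hr (by rwa [casimirOp_swap]) (by rw [neg_lie, hx]; module)
    (by rw [hxy, lie_neg]; module) (by rw [smul_neg, hy, neg_neg])

end Sl2

section Vanishing

variable {g : Type*} [LieRing g] [LieAlgebra ℂ g] [Module.Finite ℂ g] {e f h : g}

theorem eq_zero_of_casimir_of_lt_weight (hhe : ⁅h, e⁆ = (2 : ℂ) • e) (hef : ⁅e, f⁆ = h)
    {r : ℕ} {l : ℤ} {x : g} (hcas : casimirOp e f h x = ((r : ℂ) ^ 2 + 2 * r) • x)
    (hx : ⁅h, x⁆ = (l : ℂ) • x) (hrl : (r : ℤ) < l) : x = 0 := by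
  by_contra hx0
  set X : ℕ → g := fun k => (LieAlgebra.ad ℂ g e ^ k) x
  have hX_succ (k : ℕ) : X (k + 1) = ⁅e, X k⁆ := by
    simp only [X, pow_succ', Module.End.mul_apply, LieAlgebra.ad_apply]
  have hX_cas (k : ℕ) : casimirOp e f h (X k) = ((r : ℂ) ^ 2 + 2 * r) • X k := by
    induction k with
    | zero => exact hcas
    | succ k ih => rw [hX_succ, casimirOp_lie_comm hhe hef, ih, lie_smul]
  have hX_wt (k : ℕ) : ⁅h, X k⁆ = ((l + 2 * (k : ℤ) : ℤ) : ℂ) • X k := by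
    induction k with
    | zero => simpa [X] using hx
    | succ k ih =>
      rw [hX_succ, lie_lie_eq_smul_of_lie_eq_smul hhe ih]
      push_cast; ring_nf
  -- `f` lowers `X (k + 1)` back to a nonzero multiple of `X k`, since `l + 2k` exceeds `r`.
  have hX_ne (k : ℕ) : X k ≠ 0 := by
    induction k with
    | zero => exact hx0
    | succ k ih =>
      intro hk
      have hfe := four_smul_lie_f_lie_e_of_casimir hef (hX_cas k) (hX_wt k)
      rw [← hX_succ, hk, lie_zero, smul_zero, eq_comm, smul_eq_zero] at hfe
      refine ih (hfe.resolve_left ?_)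
      have hne : ((r - (l + 2 * k)) * (r + (l + 2 * k) + 2) : ℤ) ≠ 0 :=
        mul_ne_zero (by omega) (by omega)
      exact_mod_cast hne
  have hinj : Function.Injective (fun k : ℕ => ((l + 2 * (k : ℤ) : ℤ) : ℂ)) := fun k k' hkk' => by
    have := Int.cast_injective hkk'
    omega
  exact Module.Finite.not_linearIndependent_of_infinite X
    (Module.End.eigenvectors_linearIndependent' (LieAlgebra.ad ℂ g h) _ hinj X
      fun k => ⟨by rw [Module.End.mem_eigenspace_iff, LieAlgebra.ad_apply, hX_wt], hX_ne k⟩)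

theorem eq_zero_of_casimir_of_weight_lt (hhf : ⁅h, f⁆ = (-2 : ℂ) • f) (hef : ⁅e, f⁆ = h)
    {r : ℕ} {l : ℤ} {x : g} (hcas : casimirOp e f h x = ((r : ℂ) ^ 2 + 2 * r) • x)
    (hx : ⁅h, x⁆ = (l : ℂ) • x) (hlr : l < -r) : x = 0 :=
  eq_zero_of_casimir_of_lt_weight (e := f) (f := e) (h := -h) (l := -l)
    (by rw [neg_lie, hhf]; module) (by rw [← lie_skew, hef]) (by rwa [casimirOp_swap])
    (by rw [neg_lie, hx]; push_cast; module) (by omega)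

end Vanishing

section WeightDecomp

variable {g : Type*} [LieRing g] [LieAlgebra ℂ g]

structure IsWeightDecomp (h x : g) (ψ : ℤ → g) : Prop where
  lie_eq : ∀ l : ℤ, ⁅h, ψ l⁆ = (l : ℂ) • ψ l
  hasFiniteSupport : ψ.HasFiniteSupport
  eq_finsum : x = ∑ᶠ l, ψ l

namespace IsWeightDecomp

variable {h x y : g} {ψ χ : ℤ → g}

theorem unique (hψ : IsWeightDecomp h x ψ) (hχ : IsWeightDecomp h x χ) : ψ = χ := by
  classical
  funext l
  let s := hψ.hasFiniteSupport.toFinset ∪ hχ.hasFiniteSupport.toFinset ∪ {l}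
  have hψs : x = ∑ i ∈ s, ψ i :=
    hψ.eq_finsum.trans (finsum_eq_sum_of_support_subset ψ fun i hi =>
      Finset.mem_union_left _ (Finset.mem_union_left _ (Set.Finite.mem_toFinset _ |>.mpr hi)))
  have hχs : x = ∑ i ∈ s, χ i :=
    hχ.eq_finsum.trans (finsum_eq_sum_of_support_subset χ fun i hi =>
      Finset.mem_union_left _ (Finset.mem_union_right _ (Set.Finite.mem_toFinset _ |>.mpr hi)))
  have hind := (LieAlgebra.ad ℂ g h).eigenspaces_iSupIndep.comp (Int.cast_injective (α := ℂ))
  refine (iSupIndep_iff_finsetSum_eq_imp_eq _).mp hind s ψ χ (fun i _ => ⟨?_, ?_⟩)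
    (hψs.symm.trans hχs) l (by simp [s])
  · rw [Function.comp_apply, Module.End.mem_eigenspace_iff, LieAlgebra.ad_apply, hψ.lie_eq]
  · rw [Function.comp_apply, Module.End.mem_eigenspace_iff, LieAlgebra.ad_apply, hχ.lie_eq]

theorem sub (hψ : IsWeightDecomp h x ψ) (hχ : IsWeightDecomp h y χ) :
    IsWeightDecomp h (x - y) (ψ - χ) where
  lie_eq l := by simp only [Pi.sub_apply, lie_sub, hψ.lie_eq, hχ.lie_eq, smul_sub]
  hasFiniteSupport := hψ.hasFiniteSupport.sub hχ.hasFiniteSupport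
  eq_finsum := by
    rw [hψ.eq_finsum, hχ.eq_finsum, ← finsum_sub_distrib hψ.hasFiniteSupport hχ.hasFiniteSupport]
    rfl

theorem smul (hψ : IsWeightDecomp h x ψ) (c : ℂ) : IsWeightDecomp h (c • x) (c • ψ) where
  lie_eq l := by simp only [Pi.smul_apply, lie_smul, hψ.lie_eq, smul_comm c]
  hasFiniteSupport := hψ.hasFiniteSupport.smul_right fun _ => c
  eq_finsum := by rw [hψ.eq_finsum, smul_finsum' c hψ.hasFiniteSupport]; rfl

theorem lie_self (hψ : IsWeightDecomp h x ψ) :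
    IsWeightDecomp h ⁅h, x⁆ (fun l => (l : ℂ) • ψ l) where
  lie_eq l := by simp only [lie_smul, hψ.lie_eq]
  hasFiniteSupport := hψ.hasFiniteSupport.smul_right _
  eq_finsum := by
    rw [hψ.eq_finsum, ← LieAlgebra.ad_apply (R := ℂ), map_finsum _ hψ.hasFiniteSupport]
    exact finsum_congr fun l => hψ.lie_eq l

theorem lie {e : g} {a : ℤ} (he : ⁅h, e⁆ = (a : ℂ) • e) (hψ : IsWeightDecomp h x ψ) :
    IsWeightDecomp h ⁅e, x⁆ (fun l => ⁅e, ψ (l - a)⁆) where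
  lie_eq l := by
    rw [lie_lie_eq_smul_of_lie_eq_smul he (hψ.lie_eq _)]
    push_cast; ring_nf
  hasFiniteSupport :=
    (hψ.hasFiniteSupport.fun_comp (lie_zero e)).preimage sub_left_injective.injOn
  eq_finsum := by
    rw [hψ.eq_finsum, ← LieAlgebra.ad_apply (R := ℂ), map_finsum _ hψ.hasFiniteSupport]
    exact (finsum_comp_equiv (Equiv.subRight a)).symm

end IsWeightDecomp

theorem weight_component_relations {e f h xh xe xf : g} {ψh ψe ψf : ℤ → g} {ρ : ℂ}
    (hhe : ⁅h, e⁆ = (2 : ℂ) • e) (hhf : ⁅h, f⁆ = (-2 : ℂ) • f)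
    (dh : IsWeightDecomp h xh ψh) (de : IsWeightDecomp h xe ψe) (df : IsWeightDecomp h xf ψf)
    (hxh : (ρ + 2) • xh = (2 : ℂ) • ⁅e, xf⁆ - (2 : ℂ) • ⁅f, xe⁆)
    (hxe : (ρ + 2) • xe = ⁅h, xe⁆ - ⁅e, xh⁆) (hxf : (ρ + 2) • xf = ⁅f, xh⁆ - ⁅h, xf⁆) :
    (∀ l : ℤ, (ρ - l) • ψe (l + 2) = -⁅e, ψh l⁆) ∧
    (∀ l : ℤ, (ρ + l) • ψf (l - 2) = ⁅f, ψh l⁆) ∧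
    (∀ l : ℤ, (ρ + 2) • ψh l = (2 : ℂ) • ⁅e, ψf (l - 2)⁆ - (2 : ℂ) • ⁅f, ψe (l + 2)⁆) := by
  have he : ⁅h, e⁆ = ((2 : ℤ) : ℂ) • e := by exact_mod_cast hhe
  have hf : ⁅h, f⁆ = ((-2 : ℤ) : ℂ) • f := by exact_mod_cast hhf
  refine ⟨fun l => ?_, fun l => ?_, fun l => ?_⟩
  · have := congrFun ((de.smul _).unique (hxe ▸ de.lie_self.sub (dh.lie he))) (l + 2)
    simp only [Pi.smul_apply, Pi.sub_apply, add_sub_cancel_right] at this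
    push_cast at this
    linear_combination (norm := module) this
  · have := congrFun ((df.smul _).unique (hxf ▸ (dh.lie hf).sub df.lie_self)) (l - 2)
    simp only [Pi.smul_apply, Pi.sub_apply, sub_neg_eq_add, sub_add_cancel] at this
    push_cast at this
    linear_combination (norm := module) this
  · have := congrFun ((dh.smul _).unique
      (hxh ▸ ((df.lie he).smul 2).sub ((de.lie hf).smul 2))) l
    simpa only [Pi.smul_apply, Pi.sub_apply, sub_neg_eq_add] using this

end WeightDecomp

section Isotypic

variable {S g : Type*} [LieRing S] [LieAlgebra ℂ S] [LieRing g] [LieAlgebra ℂ g]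

theorem casimirDiag_apply (ι : S →ₗ⁅ℂ⁆ g) (e f h : S) (Φ : S →ₗ[ℂ] g) (u : S) :
    casimirDiag ι e f h Φ u = casimirOp (ι e) (ι f) (ι h) (Φ u) + Φ (casimirOp e f h u) -
      (4 : ℂ) • ⁅ι e, Φ ⁅f, u⁆⁆ - (4 : ℂ) • ⁅ι f, Φ ⁅e, u⁆⁆ - (2 : ℂ) • ⁅ι h, Φ ⁅h, u⁆⁆ := by
  simp only [casimirDiag, diagAct, casimirOp_apply, LinearMap.add_apply, LinearMap.smul_apply,
    LinearMap.sub_apply, LinearMap.comp_apply, LieAlgebra.ad_apply, map_add, map_sub, map_smul]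
  module

theorem smul_apply_eq_of_isotypic (ι : S →ₗ⁅ℂ⁆ g) {e f h : S} {ρ : ℂ} {Φ : S →ₗ[ℂ] g} {u : S}
    (hΦu : casimirOp (ι e) (ι f) (ι h) (Φ u) = (ρ ^ 2 + 2 * ρ) • Φ u)
    (hiso : casimirDiag ι e f h Φ = ((ρ - 2) ^ 2 + 2 * (ρ - 2)) • Φ)
    (hu : casimirOp e f h u = (8 : ℂ) • u) :
    (ρ + 2) • Φ u = ⁅ι e, Φ ⁅f, u⁆⁆ + ⁅ι f, Φ ⁅e, u⁆⁆ + (2⁻¹ : ℂ) • ⁅ι h, Φ ⁅h, u⁆⁆ := by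
  have hiso_u := LinearMap.congr_fun hiso u
  rw [casimirDiag_apply, hΦu, hu, map_smul, LinearMap.smul_apply] at hiso_u
  linear_combination (norm := module) (4⁻¹ : ℂ) • hiso_u

theorem isotypic_relations (ι : S →ₗ⁅ℂ⁆ g) {es fs hs : S}
    (hhe : ⁅hs, es⁆ = (2 : ℂ) • es) (hhf : ⁅hs, fs⁆ = (-2 : ℂ) • fs) (hef : ⁅es, fs⁆ = hs)
    {ρ : ℂ} {Φ : S →ₗ[ℂ] g}
    (hΦ : ∀ u : S, casimirOp (ι es) (ι fs) (ι hs) (Φ u) = (ρ ^ 2 + 2 * ρ) • Φ u)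
    (hiso : casimirDiag ι es fs hs Φ = ((ρ - 2) ^ 2 + 2 * (ρ - 2)) • Φ) :
    (ρ + 2) • Φ hs = (2 : ℂ) • ⁅ι es, Φ fs⁆ - (2 : ℂ) • ⁅ι fs, Φ es⁆ ∧
    (ρ + 2) • Φ es = ⁅ι hs, Φ es⁆ - ⁅ι es, Φ hs⁆ ∧
    (ρ + 2) • Φ fs = ⁅ι fs, Φ hs⁆ - ⁅ι hs, Φ fs⁆ := by
  have hfe : ⁅fs, es⁆ = -hs := by rw [← lie_skew, hef]
  have heh : ⁅es, hs⁆ = (-2 : ℂ) • es := by rw [← lie_skew, hhe]; module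
  have hfh : ⁅fs, hs⁆ = (2 : ℂ) • fs := by rw [← lie_skew, hhf]; module
  refine ⟨?_, ?_, ?_⟩
  · have := smul_apply_eq_of_isotypic ι (hΦ hs) hiso (by
      rw [casimirOp_apply, heh, hfh, lie_self, lie_zero, lie_smul, lie_smul, hef, hfe]; module)
    rw [this, hfh, heh, lie_self, map_smul, map_smul, map_zero, lie_smul, lie_smul, lie_zero]
    module
  · have := smul_apply_eq_of_isotypic ι (hΦ es) hiso (by
      rw [casimirOp_apply, hfe, lie_self, hhe, lie_neg, heh, lie_zero, lie_smul, hhe]; module)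
    rw [this, hfe, lie_self, hhe, map_neg, map_zero, map_smul, lie_neg, lie_zero, lie_smul]
    module
  · have := smul_apply_eq_of_isotypic ι (hΦ fs) hiso (by
      rw [casimirOp_apply, hef, lie_self, hhf, lie_zero, hfh, lie_smul, hhf]; module)
    rw [this, hef, lie_self, hhf, map_zero, map_smul, lie_zero, lie_smul]
    module

end Isotypic

theorem isotypic_hom_weight_component_formulas_general
    (S g : Type*) [LieRing S] [LieAlgebra ℂ S] [LieRing g] [LieAlgebra ℂ g]
    [Module.Finite ℂ g]
    (ι : S →ₗ⁅ℂ⁆ g)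
    (es fs hs : S)
    (hhe : ⁅hs, es⁆ = (2 : ℂ) • es) (hhf : ⁅hs, fs⁆ = (-2 : ℂ) • fs)
    (hef : ⁅es, fs⁆ = hs)
    (r : ℕ) (Φ : S →ₗ[ℂ] g)
    (hΦval : ∀ u : S, casimirOp (ι es) (ι fs) (ι hs) (Φ u) =
      ((r : ℂ) ^ 2 + 2 * (r : ℂ)) • Φ u)
    (hiso : casimirDiag ι es fs hs Φ =
      (((r : ℂ) - 2) ^ 2 + 2 * ((r : ℂ) - 2)) • Φ)
    (Φh Φe Φf : ℤ → g)
    (hfinh : (Function.support Φh).Finite) (hfine : (Function.support Φe).Finite)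
    (hfinf : (Function.support Φf).Finite)
    (hcomph : ∀ l : ℤ, casimirOp (ι es) (ι fs) (ι hs) (Φh l) =
        ((r : ℂ) ^ 2 + 2 * (r : ℂ)) • Φh l ∧ ⁅ι hs, Φh l⁆ = (l : ℂ) • Φh l)
    (hcompe : ∀ l : ℤ, casimirOp (ι es) (ι fs) (ι hs) (Φe l) =
        ((r : ℂ) ^ 2 + 2 * (r : ℂ)) • Φe l ∧ ⁅ι hs, Φe l⁆ = (l : ℂ) • Φe l)
    (hcompf : ∀ l : ℤ, casimirOp (ι es) (ι fs) (ι hs) (Φf l) =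
        ((r : ℂ) ^ 2 + 2 * (r : ℂ)) • Φf l ∧ ⁅ι hs, Φf l⁆ = (l : ℂ) • Φf l)
    (hsumh : Φ hs = ∑ᶠ l : ℤ, Φh l)
    (hsume : Φ es = ∑ᶠ l : ℤ, Φe l)
    (hsumf : Φ fs = ∑ᶠ l : ℤ, Φf l) :
    Φh (r : ℤ) = 0 ∧ Φh (-(r : ℤ)) = 0 ∧
    (∀ l : ℤ, Φe (l + 2) = (-((r : ℂ) - (l : ℂ))⁻¹) • ⁅ι es, Φh l⁆) ∧
    (∀ l : ℤ, Φf (l - 2) = ((r : ℂ) + (l : ℂ))⁻¹ • ⁅ι fs, Φh l⁆) := by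
  have hHE : ⁅ι hs, ι es⁆ = (2 : ℂ) • ι es := by rw [← LieHom.map_lie, hhe, map_smul]
  have hHF : ⁅ι hs, ι fs⁆ = (-2 : ℂ) • ι fs := by rw [← LieHom.map_lie, hhf, map_smul]
  have hEF : ⁅ι es, ι fs⁆ = ι hs := by rw [← LieHom.map_lie, hef]
  obtain ⟨iso_h, iso_e, iso_f⟩ := isotypic_relations ι hhe hhf hef hΦval hiso
  obtain ⟨comp_e, comp_f, comp_h⟩ := weight_component_relations hHE hHF
    ⟨fun l => (hcomph l).2, hfinh, hsumh⟩ ⟨fun l => (hcompe l).2, hfine, hsume⟩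
    ⟨fun l => (hcompf l).2, hfinf, hsumf⟩ iso_h iso_e iso_f
  have hvanE (l : ℤ) (hl : (r : ℤ) < l) : Φe l = 0 :=
    eq_zero_of_casimir_of_lt_weight hHE hEF (hcompe l).1 (hcompe l).2 hl
  have hvanF (l : ℤ) (hl : l < -r) : Φf l = 0 :=
    eq_zero_of_casimir_of_weight_lt hHF hEF (hcompf l).1 (hcompf l).2 hl
  have hhigh : Φh r = 0 := by
    rcases r.eq_zero_or_pos with rfl | hr
    · have := comp_h 0
      rw [hvanF _ (by omega), hvanE _ (by omega)] at this
      simpa using this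
    · refine eq_zero_of_casimir_of_highest_weight hEF hr (hcomph r).1
        (by exact_mod_cast (hcomph r).2) (y := Φf (r - 2)) ?_ (by simpa using comp_f r)
      simpa [hvanE (r + 2) (by omega)] using comp_h r
  have hlow : Φh (-r) = 0 := by
    rcases r.eq_zero_or_pos with rfl | hr
    · simpa using hhigh
    · refine eq_zero_of_casimir_of_lowest_weight hEF hr (hcomph (-r)).1
        (by exact_mod_cast (hcomph (-r)).2) (y := Φe (-r + 2)) ?_ (by simpa using comp_e (-r))
      simpa [hvanF (-r - 2) (by omega)] using comp_h (-r)
  refine ⟨hhigh, hlow, fun l => ?_, fun l => ?_⟩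
  · rw [neg_smul, ← smul_neg]
    refine eq_inv_smul_of_smul_eq (comp_e l) fun hrl => hvanE _ ?_
    have : l = r := by exact_mod_cast (sub_eq_zero.mp hrl).symm
    omega
  · refine eq_inv_smul_of_smul_eq (comp_f l) fun hrl => hvanF _ ?_
    have : l = -r := by exact_mod_cast eq_neg_of_add_eq_zero_right hrl
    omega

/-- Let `Φ ∈ Hom(s, g(r))` (`s = sl(2,ℂ)` embedded in `g` via
`ι`, with sl₂-triple `es, fs, hs`; `g(r)` the Casimir eigenspace of eigenvalue
`r²+2r`) be isotypic of type `r-2` for the diagonal `s`-action.  Let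
`Φh, Φe, Φf : ℤ → g` be the `h`-weight-component decompositions of
`Φ(hs), Φ(es), Φ(fs)` inside `g(r)`.  Then the components of `Φ(hs)` of weight
`±r` vanish, and `(Φe)_{ℓ+2} = (-1/(r-ℓ))·[e, (Φh)_ℓ]`,
`(Φf)_{ℓ-2} = (1/(r+ℓ))·[f, (Φh)_ℓ]` for all ℓ. -/
theorem isotypic_hom_weight_component_formulas
    (S g : Type*) [LieRing S] [LieAlgebra ℂ S] [LieRing g] [LieAlgebra ℂ g]
    [Module.Finite ℂ g] [LieAlgebra.IsSemisimple ℂ g]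
    (ι : S →ₗ⁅ℂ⁆ g) (hι : Function.Injective ι)
    (es fs hs : S)
    (hhe : ⁅hs, es⁆ = (2 : ℂ) • es) (hhf : ⁅hs, fs⁆ = (-2 : ℂ) • fs)
    (hef : ⁅es, fs⁆ = hs)
    (bS : Module.Basis (Fin 3) ℂ S)
    (hb : bS 0 = es ∧ bS 1 = fs ∧ bS 2 = hs)
    (r : ℕ) (Φ : S →ₗ[ℂ] g)
    (hΦval : ∀ u : S, casimirOp (ι es) (ι fs) (ι hs) (Φ u) =
      ((r : ℂ) ^ 2 + 2 * (r : ℂ)) • Φ u)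
    (hiso : casimirDiag ι es fs hs Φ =
      (((r : ℂ) - 2) ^ 2 + 2 * ((r : ℂ) - 2)) • Φ)
    (Φh Φe Φf : ℤ → g)
    (hfinh : (Function.support Φh).Finite) (hfine : (Function.support Φe).Finite)
    (hfinf : (Function.support Φf).Finite)
    (hcomph : ∀ l : ℤ, casimirOp (ι es) (ι fs) (ι hs) (Φh l) =
        ((r : ℂ) ^ 2 + 2 * (r : ℂ)) • Φh l ∧ ⁅ι hs, Φh l⁆ = (l : ℂ) • Φh l)
    (hcompe : ∀ l : ℤ, casimirOp (ι es) (ι fs) (ι hs) (Φe l) =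
        ((r : ℂ) ^ 2 + 2 * (r : ℂ)) • Φe l ∧ ⁅ι hs, Φe l⁆ = (l : ℂ) • Φe l)
    (hcompf : ∀ l : ℤ, casimirOp (ι es) (ι fs) (ι hs) (Φf l) =
        ((r : ℂ) ^ 2 + 2 * (r : ℂ)) • Φf l ∧ ⁅ι hs, Φf l⁆ = (l : ℂ) • Φf l)
    (hsumh : Φ hs = ∑ᶠ l : ℤ, Φh l)
    (hsume : Φ es = ∑ᶠ l : ℤ, Φe l)
    (hsumf : Φ fs = ∑ᶠ l : ℤ, Φf l) :
    Φh (r : ℤ) = 0 ∧ Φh (-(r : ℤ)) = 0 ∧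
    (∀ l : ℤ, Φe (l + 2) = (-((r : ℂ) - (l : ℂ))⁻¹) • ⁅ι es, Φh l⁆) ∧
    (∀ l : ℤ, Φf (l - 2) = ((r : ℂ) + (l : ℂ))⁻¹ • ⁅ι fs, Φh l⁆) :=
  isotypic_hom_weight_component_formulas_general S g ι es fs hs hhe hhf hef r Φ hΦval hiso Φh Φe Φf
    hfinh hfine hfinf hcomph hcompe hcompf hsumh hsume hsumf
end
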